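/- arXiv:1605.01045 — 2 statements merged into one kernel-verified Lean document; each statement's English description precedes it below -/
import Mathlib

section
/- If {f_i} is a frame for H with frame bounds A and B and frame operator S, then the canonical dual {S⁻¹ f_i} is a frame with frame bounds B⁻¹ and A⁻¹. -/
/-!
Since `⟪S x, x⟫ = ∑ |⟪fᵢ, x⟫|²`, the frame inequalities say that `A ≤ S ≤ B` in the Loewner
order of the C⋆-algebra `H →L[ℂ] H`, and inversion is operator antitone on strictly positive
elements, so `B⁻¹ ≤ S⁻¹ ≤ A⁻¹`. As `S` is self-adjoint, `S⁻¹` is the frame operator of the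
canonical dual `{S⁻¹ fᵢ}`, whose frame sums are therefore `re ⟪S⁻¹ x, x⟫`.
-/

open scoped InnerProductSpace

theorem Ring.inverse_algebraMap {R A : Type*} [Field R] [Semiring A] [Algebra R A] (c : R) :
    Ring.inverse (algebraMap R A c) = algebraMap R A c⁻¹ := by
  rcases eq_or_ne c 0 with rfl | hc
  · simp
  · let u : Aˣ := ⟨algebraMap R A c, algebraMap R A c⁻¹, by simp [← map_mul, hc],
      by simp [← map_mul, hc]⟩
    exact Ring.inverse_unit u

namespace CStarAlgebra

variable {A : Type*} [CStarAlgebra A] [PartialOrder A] [StarOrderedRing A]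

lemma algebraMap_inv_le_ringInverse {a : A} {c : ℝ} (ha : IsStrictlyPositive a)
    (hac : a ≤ algebraMap ℝ A c) : algebraMap ℝ A c⁻¹ ≤ Ring.inverse a :=
  Ring.inverse_algebraMap (A := A) c ▸ ringInverse_le_ringInverse hac

lemma ringInverse_le_algebraMap_inv {a : A} {c : ℝ} (hc : 0 < c)
    (hca : algebraMap ℝ A c ≤ a) : Ring.inverse a ≤ algebraMap ℝ A c⁻¹ :=
  Ring.inverse_algebraMap (A := A) c ▸
    ringInverse_le_ringInverse hca (isStrictlyPositive_algebraMap hc)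

end CStarAlgebra

namespace ContinuousLinearMap

variable {E : Type*} [NormedAddCommGroup E] [InnerProductSpace ℂ E]

lemma re_inner_algebraMap_apply_self (c : ℝ) (x : E) :
    (⟪algebraMap ℝ (E →L[ℂ] E) c x, x⟫_ℂ).re = c * ‖x‖ ^ 2 := by
  simp [Algebra.algebraMap_eq_smul_one, ← Complex.ofReal_pow]

lemma isSymmetric_algebraMap (c : ℝ) :
    (algebraMap ℝ (E →L[ℂ] E) c : E →ₗ[ℂ] E).IsSymmetric := fun x y => by
  simp [Algebra.algebraMap_eq_smul_one, inner_smul_left_eq_smul, inner_smul_right_eq_smul]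

lemma algebraMap_le_iff {T : E →L[ℂ] E} (hT : T.IsSymmetric) (c : ℝ) :
    algebraMap ℝ (E →L[ℂ] E) c ≤ T ↔ ∀ x, c * ‖x‖ ^ 2 ≤ (⟪T x, x⟫_ℂ).re := by
  rw [le_def, isPositive_def]
  refine (and_iff_right (hT.sub (isSymmetric_algebraMap c))).trans ?_
  simp only [reApplyInnerSelf_apply, sub_apply, inner_sub_left, RCLike.re_to_complex,
    Complex.sub_re, re_inner_algebraMap_apply_self, sub_nonneg]

lemma le_algebraMap_iff {T : E →L[ℂ] E} (hT : T.IsSymmetric) (c : ℝ) :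
    T ≤ algebraMap ℝ (E →L[ℂ] E) c ↔ ∀ x, (⟪T x, x⟫_ℂ).re ≤ c * ‖x‖ ^ 2 := by
  rw [le_def, isPositive_def]
  refine (and_iff_right ((isSymmetric_algebraMap c).sub hT)).trans ?_
  simp only [reApplyInnerSelf_apply, sub_apply, inner_sub_left, RCLike.re_to_complex,
    Complex.sub_re, re_inner_algebraMap_apply_self, sub_nonneg]

end ContinuousLinearMap

section Frame

variable {ι H : Type*} [NormedAddCommGroup H] [InnerProductSpace ℂ H]

def IsFrameOperator (f : ι → H) (S : H →L[ℂ] H) : Prop :=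
  ∀ x, HasSum (fun i => ⟪f i, x⟫_ℂ • f i) (S x)

namespace IsFrameOperator

variable {f : ι → H}

lemma hasSum_ofReal_norm_inner_sq {S : H →L[ℂ] H} (hS : IsFrameOperator f S) (x : H) :
    HasSum (fun i => ((‖⟪f i, x⟫_ℂ‖ ^ 2 : ℝ) : ℂ)) ⟪S x, x⟫_ℂ := by
  have hterm (i : ι) : star ⟪x, ⟪f i, x⟫_ℂ • f i⟫_ℂ = ((‖⟪f i, x⟫_ℂ‖ ^ 2 : ℝ) : ℂ) := by
    rw [inner_smul_right, ← inner_conj_symm x (f i), Complex.star_def, map_mul,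
      Complex.conj_conj, Complex.conj_mul', Complex.ofReal_pow]
  have h := ((hS x).mapL (innerSL ℂ x)).star
  simp only [innerSL_apply_apply, hterm] at h
  rwa [← inner_conj_symm (S x) x]

lemma hasSum_norm_inner_sq {S : H →L[ℂ] H} (hS : IsFrameOperator f S) (x : H) :
    HasSum (fun i => ‖⟪f i, x⟫_ℂ‖ ^ 2) (⟪S x, x⟫_ℂ).re :=
  Complex.hasSum_re (hS.hasSum_ofReal_norm_inner_sq x)

lemma isPositive {S : H →L[ℂ] H} (hS : IsFrameOperator f S) : S.IsPositive := by
  refine (ContinuousLinearMap.isPositive_iff_complex S).mpr fun x => ⟨?_, ?_⟩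
  · exact ((hS.hasSum_ofReal_norm_inner_sq x).unique
      (Complex.hasSum_ofReal.mpr (hS.hasSum_norm_inner_sq x))).symm
  · exact (hS.hasSum_norm_inner_sq x).nonneg fun i => by positivity

lemma symm {S : H ≃L[ℂ] H} (hS : IsFrameOperator f S) :
    IsFrameOperator (fun i => S.symm (f i)) (S.symm : H →L[ℂ] H) := by
  have hsymm : (S.symm : H →L[ℂ] H).IsSymmetric :=
    LinearMap.IsSymmetric.toLinearMap_symm (T := S.toLinearEquiv) hS.isPositive.isSymmetric
  intro x
  convert (hS (S.symm x)).mapL (S.symm : H →L[ℂ] H) using 2 with i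
  · rw [map_smul]
    congr 1
    exact hsymm _ _
  · simp

end IsFrameOperator

end Frame

theorem canonical_dual_is_frame_with_inverse_bounds_general
    {H : Type*} [NormedAddCommGroup H] [InnerProductSpace ℂ H] [CompleteSpace H]
    (f : ℕ → H) (A B : ℝ) (hA : 0 < A)
    (hframe : ∀ x : H,
      A * ‖x‖ ^ 2 ≤ ∑' i, ‖⟪f i, x⟫_ℂ‖ ^ 2 ∧ ∑' i, ‖⟪f i, x⟫_ℂ‖ ^ 2 ≤ B * ‖x‖ ^ 2)
    (S : H ≃L[ℂ] H)
    (hS : ∀ x : H, HasSum (fun i => ⟪f i, x⟫_ℂ • f i) (S x)) :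
    ∀ x : H,
      B⁻¹ * ‖x‖ ^ 2 ≤ ∑' i, ‖⟪S.symm (f i), x⟫_ℂ‖ ^ 2 ∧
        ∑' i, ‖⟪S.symm (f i), x⟫_ℂ‖ ^ 2 ≤ A⁻¹ * ‖x‖ ^ 2 := by
  have hS : IsFrameOperator f S := hS
  have hSsymm := hS.isPositive.isSymmetric
  have hAS : algebraMap ℝ (H →L[ℂ] H) A ≤ S :=
    (ContinuousLinearMap.algebraMap_le_iff hSsymm A).mpr fun x =>
      (hS.hasSum_norm_inner_sq x).tsum_eq ▸ (hframe x).1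
  have hSB : (S : H →L[ℂ] H) ≤ algebraMap ℝ (H →L[ℂ] H) B :=
    (ContinuousLinearMap.le_algebraMap_iff hSsymm B).mpr fun x =>
      (hS.hasSum_norm_inner_sq x).tsum_eq ▸ (hframe x).2
  have hinv : Ring.inverse (S : H →L[ℂ] H) = S.symm := Ring.inverse_unit S.toUnit
  have hBS : algebraMap ℝ (H →L[ℂ] H) B⁻¹ ≤ S.symm := hinv ▸
    CStarAlgebra.algebraMap_inv_le_ringInverse ((isStrictlyPositive_algebraMap hA).of_le hAS) hSB
  have hSA : (S.symm : H →L[ℂ] H) ≤ algebraMap ℝ (H →L[ℂ] H) A⁻¹ :=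
    hinv ▸ CStarAlgebra.ringInverse_le_algebraMap_inv hA hAS
  have hdual := hS.symm
  have hdual_symm := hdual.isPositive.isSymmetric
  intro x
  rw [(hdual.hasSum_norm_inner_sq x).tsum_eq]
  exact ⟨(ContinuousLinearMap.algebraMap_le_iff hdual_symm _).mp hBS x,
    (ContinuousLinearMap.le_algebraMap_iff hdual_symm _).mp hSA x⟩

/-- If `{f i}` is a frame with bounds `A, B` and frame operator `S`, then the canonical
dual `{S⁻¹ f i}` is a frame with bounds `B⁻¹` and `A⁻¹`. -/
theorem canonical_dual_is_frame_with_inverse_bounds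
    {H : Type*} [NormedAddCommGroup H] [InnerProductSpace ℂ H] [CompleteSpace H]
    (f : ℕ → H) (A B : ℝ) (hA : 0 < A) (hAB : A ≤ B)
    (hframe : ∀ x : H,
      A * ‖x‖ ^ 2 ≤ ∑' i, ‖⟪f i, x⟫_ℂ‖ ^ 2 ∧ ∑' i, ‖⟪f i, x⟫_ℂ‖ ^ 2 ≤ B * ‖x‖ ^ 2)
    (S : H ≃L[ℂ] H)
    (hS : ∀ x : H, HasSum (fun i => ⟪f i, x⟫_ℂ • f i) (S x)) :
    ∀ x : H,
      B⁻¹ * ‖x‖ ^ 2 ≤ ∑' i, ‖⟪S.symm (f i), x⟫_ℂ‖ ^ 2 ∧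
        ∑' i, ‖⟪S.symm (f i), x⟫_ℂ‖ ^ 2 ≤ A⁻¹ * ‖x‖ ^ 2 :=
  canonical_dual_is_frame_with_inverse_bounds_general f A B hA hframe S hS
end

section
/- Let {(W_i, 1)} be a fusion frame with dual {(V_i, 1)}. If φ* = ψ, where φ({f_i}) = {π_{V_i} S_W⁻¹ f_i} and ψ({g_i}) = {π_{W_i} S_V⁻¹ g_i}, then {(W_i, 1)} is also a dual of {(V_i, 1)}. Conversely, if {W_i} and {V_i} are fusion Riesz bases and each is a dual of the other, then φ* = ψ. -/
open scoped InnerProductSpace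

/-- Orthogonal projection onto a complete subspace, as an operator `H →L H`. -/
noncomputable def fusionProj {H : Type*} [NormedAddCommGroup H] [InnerProductSpace ℂ H]
    (K : Submodule ℂ H) [CompleteSpace K] : H →L[ℂ] H :=
  K.subtypeL.comp (Submodule.orthogonalProjectionOnto K)

/-- `{(W i, 1)}` is a fusion Riesz basis: the span of the `W i` is dense and there are
`0 < C ≤ D` with `C (∑_{j∈J} ‖f j‖²)^{1/2} ≤ ‖∑_{j∈J} f j‖ ≤ D (∑_{j∈J} ‖f j‖²)^{1/2}`
for every finite `J` and `f j ∈ W j`. -/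
def IsFusionRieszBasis {H : Type*} [NormedAddCommGroup H] [InnerProductSpace ℂ H]
    {ι : Type*} (W : ι → Submodule ℂ H) : Prop :=
  (⨆ i, W i).topologicalClosure = ⊤ ∧
  ∃ C D : ℝ, 0 < C ∧ C ≤ D ∧
    ∀ (J : Finset ι) (f : ι → H), (∀ j, f j ∈ W j) →
      C * Real.sqrt (∑ j ∈ J, ‖f j‖ ^ 2) ≤ ‖∑ j ∈ J, f j‖ ∧
        ‖∑ j ∈ J, f j‖ ≤ D * Real.sqrt (∑ j ∈ J, ‖f j‖ ^ 2)

/-!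
Let `T_W f = (π_{W i} f)ᵢ` and `T_V f = (π_{V i} f)ᵢ` be the analysis operators into `ℓ²`; the
upper frame bounds make them bounded, and their adjoints are the synthesis maps `(vᵢ) ↦ ∑ vᵢ`.
Duality of `V` to `W` says `T_V* φ T_W = 1`; taking adjoints gives `T_W* φ* T_V = 1`, which for
`φ* = ψ` says that `W` is dual to `V`.

Conversely, expansions along a fusion Riesz basis `V` are unique, so comparing
`f = ∑ π_{V i} S_W⁻¹ π_{W i} f` with `f = ∑ π_{V i} S_V⁻¹ f` gives `π_{V i} S_W⁻¹ = π_{V i} S_V⁻¹`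
on `W i`. With `S_V⁻¹` self-adjoint this is `⟪g, S_W⁻¹ v⟫ = ⟪S_V⁻¹ g, v⟫` for `g ∈ V i`, `v ∈ W i`,
i.e. `φ* = ψ` coordinatewise.
-/

open ContinuousLinearMap

section FusionFrame

variable {H : Type*} [NormedAddCommGroup H] [InnerProductSpace ℂ H] {ι : Type*}

theorem fusionProj_of_mem {K : Submodule ℂ H} [CompleteSpace K] {f : H} (hf : f ∈ K) :
    fusionProj K f = f :=
  K.starProjection_eq_self_iff.mpr hf

theorem fusionProj_mem (K : Submodule ℂ H) [CompleteSpace K] (f : H) : fusionProj K f ∈ K :=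
  (K.orthogonalProjectionOnto f).2

theorem inner_fusionProj_left_eq_right (K : Submodule ℂ H) [CompleteSpace K] (u v : H) :
    ⟪fusionProj K u, v⟫_ℂ = ⟪u, fusionProj K v⟫_ℂ :=
  K.inner_starProjection_left_eq_right u v

theorem lp.norm_sq_eq_tsum {G : ι → Type*} [∀ i, NormedAddCommGroup (G i)] (x : lp G 2) :
    ‖x‖ ^ 2 = ∑' i, ‖x i‖ ^ 2 := by
  simpa using lp.norm_rpow_eq_tsum (p := 2) (by norm_num) x

theorem summable_norm_fusionProj_sq (W : ι → Submodule ℂ H) [∀ i, CompleteSpace (W i)] {A : ℝ}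
    (hA : 0 < A) (hlower : ∀ f : H, A * ‖f‖ ^ 2 ≤ ∑' i, ‖fusionProj (W i) f‖ ^ 2) (f : H) :
    Summable fun i => ‖fusionProj (W i) f‖ ^ 2 := by
  by_contra h
  -- a non-summable `tsum` is `0`, so the lower bound forces `f = 0`
  have hf : ‖f‖ ^ 2 ≤ 0 := by
    have := hlower f
    rw [tsum_eq_zero_of_not_summable h] at this
    nlinarith [sq_nonneg ‖f‖]
  have hf : f = 0 := by simpa using hf
  simp [hf] at h

theorem IsFusionRieszBasis.eq_zero_of_hasSum_zero {V : ι → Submodule ℂ H}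
    (hV : IsFusionRieszBasis V) {e : ι → H} (he : ∀ i, e i ∈ V i) (h0 : HasSum e 0) (i : ι) :
    e i = 0 := by
  obtain ⟨-, C, D, hC, -, hbd⟩ := hV
  have hlower : ∀ J : Finset ι, {i} ≤ J → C * ‖e i‖ ≤ ‖∑ j ∈ J, e j‖ := fun J hJ =>
    calc C * ‖e i‖ ≤ C * √(∑ j ∈ J, ‖e j‖ ^ 2) := by
          gcongr
          exact Real.le_sqrt_of_sq_le
            (Finset.single_le_sum (fun j _ => sq_nonneg ‖e j‖) (Finset.singleton_subset_iff.mp hJ))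
      _ ≤ ‖∑ j ∈ J, e j‖ := (hbd J e he).1
  have hle : C * ‖e i‖ ≤ 0 :=
    ge_of_tendsto (by simpa using h0.norm) (Filter.eventually_atTop.mpr ⟨{i}, hlower⟩)
  exact norm_le_zero_iff.mp (nonpos_of_mul_nonpos_right hle hC)

section Analysis

variable (W : ι → Submodule ℂ H) [∀ i, CompleteSpace (W i)] {B : ℝ}

noncomputable def fusionAnalysis (hsum : ∀ f : H, Summable fun i => ‖fusionProj (W i) f‖ ^ 2)
    (hB : ∀ f : H, ∑' i, ‖fusionProj (W i) f‖ ^ 2 ≤ B * ‖f‖ ^ 2) :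
    H →L[ℂ] lp (fun i => W i) 2 :=
  LinearMap.mkContinuous
    { toFun := fun f => ⟨fun i => (W i).orthogonalProjectionOnto f,
        memℓp_gen (by simp only [ENNReal.toReal_ofNat, Real.rpow_two]; exact hsum f)⟩
      map_add' := fun f g => by ext i : 2; exact map_add _ f g
      map_smul' := fun c f => by ext i : 2; exact map_smul _ c f }
    √B fun f => by
      calc _ ≤ √(B * ‖f‖ ^ 2) := Real.le_sqrt_of_sq_le ((lp.norm_sq_eq_tsum _).trans_le (hB f))
        _ = √B * ‖f‖ := by rw [Real.sqrt_mul' _ (sq_nonneg _), Real.sqrt_sq (norm_nonneg _)]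

variable (hsum : ∀ f : H, Summable fun i => ‖fusionProj (W i) f‖ ^ 2)
  (hB : ∀ f : H, ∑' i, ‖fusionProj (W i) f‖ ^ 2 ≤ B * ‖f‖ ^ 2)

@[simp]
theorem fusionAnalysis_apply (f : H) (i : ι) :
    fusionAnalysis W hsum hB f i = (W i).orthogonalProjectionOnto f :=
  rfl

theorem hasSum_adjoint_fusionAnalysis [CompleteSpace H] (v : lp (fun i => W i) 2) :
    HasSum (fun i => (v i : H)) (adjoint (fusionAnalysis W hsum hB) v) := by
  classical
  have hsingle (i : ι) (x : W i) : adjoint (fusionAnalysis W hsum hB) (lp.single 2 i x) = x :=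
    ext_inner_right ℂ fun h => by
      rw [adjoint_inner_left, lp.inner_single_left, fusionAnalysis_apply,
        Submodule.inner_orthogonalProjectionOnto_eq_of_mem_left]
  simpa only [hsingle] using
    (lp.hasSum_single ENNReal.ofNat_ne_top v).mapL (adjoint (fusionAnalysis W hsum hB))

end Analysis

theorem hasSum_fusionProj_comp_of_adjoint_eq [CompleteSpace H] (W V : ι → Submodule ℂ H)
    [∀ i, CompleteSpace (W i)] [∀ i, CompleteSpace (V i)] {B B' : ℝ}
    (hWsum : ∀ f : H, Summable fun i => ‖fusionProj (W i) f‖ ^ 2)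
    (hWB : ∀ f : H, ∑' i, ‖fusionProj (W i) f‖ ^ 2 ≤ B * ‖f‖ ^ 2)
    (hVsum : ∀ f : H, Summable fun i => ‖fusionProj (V i) f‖ ^ 2)
    (hVB : ∀ f : H, ∑' i, ‖fusionProj (V i) f‖ ^ 2 ≤ B' * ‖f‖ ^ 2)
    (P Q : H →L[ℂ] H)
    (hdual : ∀ f : H, HasSum (fun i => fusionProj (V i) (P (fusionProj (W i) f))) f)
    (φ : lp (fun i => ↥(W i)) 2 →L[ℂ] lp (fun i => ↥(V i)) 2)
    (hφ : ∀ (v : lp (fun i => ↥(W i)) 2) (i : ι),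
      φ v i = Submodule.orthogonalProjectionOnto (V i) (P (v i : H)))
    (ψ : lp (fun i => ↥(V i)) 2 →L[ℂ] lp (fun i => ↥(W i)) 2)
    (hψ : ∀ (g : lp (fun i => ↥(V i)) 2) (i : ι),
      ψ g i = Submodule.orthogonalProjectionOnto (W i) (Q (g i : H)))
    (hadj : adjoint φ = ψ) (f : H) :
    HasSum (fun i => fusionProj (W i) (Q (fusionProj (V i) f))) f := by
  set TW := fusionAnalysis W hWsum hWB
  set TV := fusionAnalysis V hVsum hVB
  have hV : adjoint TV ∘L φ ∘L TW = .id ℂ H := by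
    ext h
    refine (hasSum_adjoint_fusionAnalysis V hVsum hVB (φ (TW h))).unique ?_
    simp only [hφ]
    exact hdual h
  have hW : adjoint TW ∘L ψ ∘L TV = .id ℂ H := by
    simpa only [adjoint_comp, adjoint_adjoint, hadj, adjoint_id, comp_assoc] using
      congrArg adjoint hV
  have hsum := hasSum_adjoint_fusionAnalysis W hWsum hWB (ψ (TV f))
  simp only [hψ] at hsum
  convert hsum using 1
  · rfl
  · exact (DFunLike.congr_fun hW f).symm

theorem IsFusionRieszBasis.eq_of_hasSum {V : ι → Submodule ℂ H} (hV : IsFusionRieszBasis V)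
    {e e' : ι → H} (he : ∀ i, e i ∈ V i) (he' : ∀ i, e' i ∈ V i) {f : H} (hf : HasSum e f)
    (hf' : HasSum e' f) : e = e' :=
  funext fun i => sub_eq_zero.mp <|
    hV.eq_zero_of_hasSum_zero (fun j => sub_mem (he j) (he' j)) (by simpa using hf.sub hf') i

theorem isSelfAdjoint_of_hasSum_fusionProj [CompleteSpace H] (V : ι → Submodule ℂ H)
    [∀ i, CompleteSpace (V i)] (S : H →L[ℂ] H)
    (hS : ∀ f : H, HasSum (fun i => fusionProj (V i) f) (S f)) : IsSelfAdjoint S :=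
  LinearMap.IsSymmetric.isSelfAdjoint fun x y => by
    have hx := (hS x).mapL (innerSLFlip ℂ y)
    have hy := (hS y).mapL (innerSL ℂ x)
    simp only [innerSLFlip_apply_apply, innerSL_apply_apply, inner_fusionProj_left_eq_right]
      at hx hy
    exact hx.unique hy

theorem ContinuousLinearEquiv.inner_symm_apply_left_eq_right [CompleteSpace H] {S : H ≃L[ℂ] H}
    (hS : IsSelfAdjoint (S : H →L[ℂ] H)) (x y : H) : ⟪S.symm x, y⟫_ℂ = ⟪x, S.symm y⟫_ℂ :=
  calc ⟪S.symm x, y⟫_ℂ = ⟪S.symm x, S (S.symm y)⟫_ℂ := by rw [S.apply_symm_apply]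
    _ = ⟪S (S.symm x), S.symm y⟫_ℂ := (hS.isSymmetric _ _).symm
    _ = ⟪x, S.symm y⟫_ℂ := by rw [S.apply_symm_apply]

theorem inner_apply_eq_inner_symm_apply_of_isFusionRieszBasis [CompleteSpace H]
    {W V : ι → Submodule ℂ H} [∀ i, CompleteSpace (W i)] [∀ i, CompleteSpace (V i)]
    (hV : IsFusionRieszBasis V) (P : H →L[ℂ] H) (S : H ≃L[ℂ] H)
    (hS : ∀ f : H, HasSum (fun i => fusionProj (V i) f) (S f))
    (hdual : ∀ f : H, HasSum (fun i => fusionProj (V i) (P (fusionProj (W i) f))) f)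
    {i : ι} {a b : H} (ha : a ∈ V i) (hb : b ∈ W i) :
    ⟪a, P b⟫_ℂ = ⟪S.symm a, b⟫_ℂ := by
  have hcoef : fusionProj (V i) (P b) = fusionProj (V i) (S.symm b) := by
    have := congrFun (hV.eq_of_hasSum (fun _ => fusionProj_mem _ _) (fun _ => fusionProj_mem _ _)
      (hdual b) (by simpa using hS (S.symm b))) i
    rwa [fusionProj_of_mem hb] at this
  calc ⟪a, P b⟫_ℂ = ⟪a, fusionProj (V i) (P b)⟫_ℂ := by
        rw [← inner_fusionProj_left_eq_right, fusionProj_of_mem ha]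
    _ = ⟪a, S.symm b⟫_ℂ := by rw [hcoef, ← inner_fusionProj_left_eq_right, fusionProj_of_mem ha]
    _ = ⟪S.symm a, b⟫_ℂ := (S.inner_symm_apply_left_eq_right
          (isSelfAdjoint_of_hasSum_fusionProj V S hS) a b).symm

theorem adjoint_eq_of_isFusionRieszBasis [CompleteSpace H] {W V : ι → Submodule ℂ H}
    [∀ i, CompleteSpace (W i)] [∀ i, CompleteSpace (V i)]
    (hV : IsFusionRieszBasis V) (P : H →L[ℂ] H) (S : H ≃L[ℂ] H)
    (hS : ∀ f : H, HasSum (fun i => fusionProj (V i) f) (S f))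
    (hdual : ∀ f : H, HasSum (fun i => fusionProj (V i) (P (fusionProj (W i) f))) f)
    (φ : lp (fun i => ↥(W i)) 2 →L[ℂ] lp (fun i => ↥(V i)) 2)
    (hφ : ∀ (v : lp (fun i => ↥(W i)) 2) (i : ι),
      φ v i = Submodule.orthogonalProjectionOnto (V i) (P (v i : H)))
    (ψ : lp (fun i => ↥(V i)) 2 →L[ℂ] lp (fun i => ↥(W i)) 2)
    (hψ : ∀ (g : lp (fun i => ↥(V i)) 2) (i : ι),
      ψ g i = Submodule.orthogonalProjectionOnto (W i) (S.symm (g i : H))) :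
    adjoint φ = ψ := by
  refine ContinuousLinearMap.ext fun g => ext_inner_right ℂ fun v => ?_
  rw [adjoint_inner_left, lp.inner_eq_tsum, lp.inner_eq_tsum]
  refine tsum_congr fun i => ?_
  rw [hφ, hψ, Submodule.inner_orthogonalProjectionOnto_eq_of_mem_left,
    Submodule.inner_orthogonalProjectionOnto_eq_of_mem_right]
  exact inner_apply_eq_inner_symm_apply_of_isFusionRieszBasis hV P S hS hdual (g i).2 (v i).2

end FusionFrame

theorem fusion_mutual_duality_via_phi_psi_general
    {H : Type*} [NormedAddCommGroup H] [InnerProductSpace ℂ H] [CompleteSpace H]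
    {ι : Type*} (W V : ι → Submodule ℂ H) [∀ i, CompleteSpace (W i)]
    [∀ i, CompleteSpace (V i)]
    (A B A' B' : ℝ) (hA : 0 < A) (hA' : 0 < A')
    (hWframe : ∀ f : H,
      A * ‖f‖ ^ 2 ≤ ∑' i, ‖fusionProj (W i) f‖ ^ 2 ∧
        ∑' i, ‖fusionProj (W i) f‖ ^ 2 ≤ B * ‖f‖ ^ 2)
    (hVframe : ∀ f : H,
      A' * ‖f‖ ^ 2 ≤ ∑' i, ‖fusionProj (V i) f‖ ^ 2 ∧
        ∑' i, ‖fusionProj (V i) f‖ ^ 2 ≤ B' * ‖f‖ ^ 2)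
    (SW SV : H ≃L[ℂ] H)
    (hSV : ∀ f : H, HasSum (fun i => fusionProj (V i) f) (SV f))
    (hdual : ∀ f : H, HasSum (fun i => fusionProj (V i) (SW.symm (fusionProj (W i) f))) f)
    (φ : lp (fun i => ↥(W i)) 2 →L[ℂ] lp (fun i => ↥(V i)) 2)
    (hφ : ∀ (v : lp (fun i => ↥(W i)) 2) (i : ι),
      φ v i = Submodule.orthogonalProjectionOnto (V i) (SW.symm (v i : H)))
    (ψ : lp (fun i => ↥(V i)) 2 →L[ℂ] lp (fun i => ↥(W i)) 2)
    (hψ : ∀ (g : lp (fun i => ↥(V i)) 2) (i : ι),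
      ψ g i = Submodule.orthogonalProjectionOnto (W i) (SV.symm (g i : H))) :
    (ContinuousLinearMap.adjoint φ = ψ →
      ∀ f : H, HasSum (fun i => fusionProj (W i) (SV.symm (fusionProj (V i) f))) f) ∧
    (IsFusionRieszBasis W → IsFusionRieszBasis V →
      (∀ f : H, HasSum (fun i => fusionProj (W i) (SV.symm (fusionProj (V i) f))) f) →
      ContinuousLinearMap.adjoint φ = ψ) := by
  have hWsum := summable_norm_fusionProj_sq W hA fun f => (hWframe f).1
  have hVsum := summable_norm_fusionProj_sq V hA' fun f => (hVframe f).1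
  exact ⟨hasSum_fusionProj_comp_of_adjoint_eq W V hWsum (fun f => (hWframe f).2) hVsum
    (fun f => (hVframe f).2) SW.symm SV.symm hdual φ hφ ψ hψ,
    fun _ hV _ => adjoint_eq_of_isFusionRieszBasis hV SW.symm SV hSV hdual φ hφ ψ hψ⟩

/-- Let `{(W i, 1)}` be a fusion frame with dual `{(V i, 1)}`. If `φ* = ψ`, where
`φ {f i} = {π_{V i} S_W⁻¹ f i}` and `ψ {g i} = {π_{W i} S_V⁻¹ g i}`, then `{(W i, 1)}`
is also a dual of `{(V i, 1)}`. Conversely, if `{W i}` and `{V i}` are fusion Riesz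
bases and each is a dual of the other, then `φ* = ψ`. -/
theorem fusion_mutual_duality_via_phi_psi
    {H : Type*} [NormedAddCommGroup H] [InnerProductSpace ℂ H] [CompleteSpace H]
    {ι : Type*} (W V : ι → Submodule ℂ H) [∀ i, CompleteSpace (W i)]
    [∀ i, CompleteSpace (V i)]
    (A B A' B' : ℝ) (hA : 0 < A) (hAB : A ≤ B) (hA' : 0 < A') (hAB' : A' ≤ B')
    (hWframe : ∀ f : H,
      A * ‖f‖ ^ 2 ≤ ∑' i, ‖fusionProj (W i) f‖ ^ 2 ∧
        ∑' i, ‖fusionProj (W i) f‖ ^ 2 ≤ B * ‖f‖ ^ 2)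
    (hVframe : ∀ f : H,
      A' * ‖f‖ ^ 2 ≤ ∑' i, ‖fusionProj (V i) f‖ ^ 2 ∧
        ∑' i, ‖fusionProj (V i) f‖ ^ 2 ≤ B' * ‖f‖ ^ 2)
    (SW SV : H ≃L[ℂ] H)
    (hSW : ∀ f : H, HasSum (fun i => fusionProj (W i) f) (SW f))
    (hSV : ∀ f : H, HasSum (fun i => fusionProj (V i) f) (SV f))
    (hdual : ∀ f : H, HasSum (fun i => fusionProj (V i) (SW.symm (fusionProj (W i) f))) f)
    (φ : lp (fun i => ↥(W i)) 2 →L[ℂ] lp (fun i => ↥(V i)) 2)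
    (hφ : ∀ (v : lp (fun i => ↥(W i)) 2) (i : ι),
      φ v i = Submodule.orthogonalProjectionOnto (V i) (SW.symm (v i : H)))
    (ψ : lp (fun i => ↥(V i)) 2 →L[ℂ] lp (fun i => ↥(W i)) 2)
    (hψ : ∀ (g : lp (fun i => ↥(V i)) 2) (i : ι),
      ψ g i = Submodule.orthogonalProjectionOnto (W i) (SV.symm (g i : H))) :
    (ContinuousLinearMap.adjoint φ = ψ →
      ∀ f : H, HasSum (fun i => fusionProj (W i) (SV.symm (fusionProj (V i) f))) f) ∧
    (IsFusionRieszBasis W → IsFusionRieszBasis V →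
      (∀ f : H, HasSum (fun i => fusionProj (W i) (SV.symm (fusionProj (V i) f))) f) →
      ContinuousLinearMap.adjoint φ = ψ) :=
  fusion_mutual_duality_via_phi_psi_general W V A B A' B' hA hA' hWframe hVframe SW SV hSV hdual φ
    hφ ψ hψ
end
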